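/- arXiv:1508.03228 — 2 statements merged into one kernel-verified Lean document; each statement's English description precedes it below -/
import Mathlib

section
/- Let k₂ ∈ ℝ and define vector fields f, g : ℝ³ → ℝ³ by f(x) = k₂ x₂² • (0, −2, 1) and g(x) = x₁ • (−1, 1, 0). Then for every x ∈ ℝ³, [g, [f, g]](x) = 2 k₂ x₁ (x₂ − x₁) • (0, −2, 1). (Second-order Lie bracket computation for the consecutive reaction X₁ → X₂, 2X₂ → X₃.) -/
/-- The Lie bracket of two vector fields on `ℝ³`:
`[φ,ψ](x) = Dψ(x)(φ(x)) − Dφ(x)(ψ(x))`. -/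
noncomputable def lieBracket (φ ψ : (Fin 3 → ℝ) → (Fin 3 → ℝ))
    (x : Fin 3 → ℝ) : Fin 3 → ℝ :=
  fderiv ℝ ψ x (φ x) - fderiv ℝ φ x (ψ x)

/-- Drift vector field `f(x) = k₂ x₂² • (0, −2, 1)` of the consecutive reaction
`X₁ → X₂`, `2X₂ → X₃`. -/
noncomputable def drift (k₂ : ℝ) (x : Fin 3 → ℝ) : Fin 3 → ℝ :=
  (k₂ * x 1 ^ 2) • ![0, -2, 1]

/-- Control vector field `g(x) = x₁ • (−1, 1, 0)`. -/
noncomputable def ctrl (x : Fin 3 → ℝ) : Fin 3 → ℝ :=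
  x 0 • ![-1, 1, 0]

abbrev Pj (i : Fin 3) : (Fin 3 → ℝ) →L[ℝ] ℝ :=
  ContinuousLinearMap.proj (R := ℝ) (φ := fun _ : Fin 3 => ℝ) i

lemma hproj (i : Fin 3) (x : Fin 3 → ℝ) :
    HasFDerivAt (fun x : Fin 3 → ℝ => x i) (Pj i) x :=
  (Pj i).hasFDerivAt

lemma hctrl (x : Fin 3 → ℝ) :
    HasFDerivAt ctrl ((Pj 0).smulRight ![-1,1,0]) x :=
  (hproj 0 x).smul_const _

lemma hdrift (k₂ : ℝ) (x : Fin 3 → ℝ) :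
    HasFDerivAt (drift k₂)
      ((k₂ • (x 1 • Pj 1 + x 1 • Pj 1)).smulRight ![0,-2,1]) x := by
  have hd : drift k₂ = fun x : Fin 3 → ℝ => (k₂ * (x 1 * x 1)) • ![(0:ℝ),-2,1] := by
    funext y
    simp [drift, pow_two]
  rw [hd]
  exact (((hproj 1 x).mul (hproj 1 x)).const_mul k₂).smul_const _

lemma mid_eq (k₂ : ℝ) (x : Fin 3 → ℝ) :
    lieBracket (drift k₂) ctrl x = (-(2 * k₂) * (x 0 * x 1)) • ![0,-2,1] := by
  unfold lieBracket
  rw [(hctrl x).fderiv, (hdrift k₂ x).fderiv]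
  funext i
  fin_cases i <;>
    simp [drift, ctrl, Matrix.cons_val_zero, Matrix.cons_val_one] <;> ring

lemma hmid (k₂ : ℝ) (x : Fin 3 → ℝ) :
    HasFDerivAt (fun x : Fin 3 → ℝ => (-(2 * k₂) * (x 0 * x 1)) • ![(0:ℝ),-2,1])
      (((-(2 * k₂)) • (x 0 • Pj 1 + x 1 • Pj 0)).smulRight ![0,-2,1]) x := by
  exact (((hproj 0 x).mul (hproj 1 x)).const_mul (-(2 * k₂))).smul_const _

/-- `[g, [f, g]](x) = 2 k₂ x₁ (x₂ − x₁) • (0, −2, 1)` for every `x ∈ ℝ³`. -/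
theorem lieBracket_ctrl_lieBracket (k₂ : ℝ) (x : Fin 3 → ℝ) :
    lieBracket ctrl (lieBracket (drift k₂) ctrl) x =
      (2 * k₂ * x 0 * (x 1 - x 0)) • ![0, -2, 1] := by
  have hfun : lieBracket (drift k₂) ctrl =
      fun x : Fin 3 → ℝ => (-(2 * k₂) * (x 0 * x 1)) • ![(0:ℝ),-2,1] :=
    funext (mid_eq k₂)
  rw [hfun]
  unfold lieBracket
  rw [(hmid k₂ x).fderiv, (hctrl x).fderiv]
  funext i
  fin_cases i <;>
    simp [ctrl, Matrix.cons_val_zero, Matrix.cons_val_one] <;> ring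
end

section
/- Let k₂ ∈ ℝ with k₂ ≠ 0, and define vector fields f, g : ℝ³ → ℝ³ by f(x) = k₂ x₂² • (0, −2, 1) and g(x) = x₁ • (−1, 1, 0). Then for every x ∈ ℝ³ with x₁ ≠ 0, the span of the three vectors g(x), [f, g](x), [g, [f, g]](x) equals span_ℝ{(−1, 1, 0), (0, −2, 1)}, a 2-dimensional subspace of ℝ³. (The consecutive reaction X₁ → X₂, 2X₂ → X₃ with the rate coefficient of its initializer as single control input is controllable at every point with x₁ ≠ 0.) -/
/-! Both fields have a constant direction and a scalar profile, `f = k₂ x₂² c` and `g = x₁ d` with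
`c = (0, −2, 1)`, `d = (−1, 1, 0)`; for such fields `[a u, b v] = (a · Db u) v − (b · Da v) u`.
Since the first coordinate of `c` vanishes, the `d`-components of the brackets drop out:
`[f, g] = −2k₂x₁x₂ c` and `[g, [f, g]] = −2k₂x₁(x₁ − x₂) c`, whose coefficients do not vanish
together when `x₁ ≠ 0`. -/

section LinearAlgebra

variable {K V : Type*} [Field K] [AddCommGroup V] [Module K V]

theorem span_pair_smul_eq_span_singleton {b c : K} (hbc : b ≠ 0 ∨ c ≠ 0) (v : V) :
    Submodule.span K {b • v, c • v} = K ∙ v := by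
  rw [Submodule.span_insert]
  rcases hbc with hb | hc
  · rw [Submodule.span_singleton_smul_eq hb.isUnit]
    exact sup_eq_left.mpr (Submodule.span_singleton_smul_le K c v)
  · rw [Submodule.span_singleton_smul_eq hc.isUnit]
    exact sup_eq_right.mpr (Submodule.span_singleton_smul_le K b v)

theorem span_smul_triple_eq_span_pair {a b c : K} (ha : a ≠ 0) (hbc : b ≠ 0 ∨ c ≠ 0) (u v : V) :
    Submodule.span K {a • u, b • v, c • v} = Submodule.span K {u, v} := by
  rw [Submodule.span_insert, span_pair_smul_eq_span_singleton hbc,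
    Submodule.span_singleton_smul_eq ha.isUnit, ← Submodule.span_insert]

theorem finrank_span_pair_eq_two {u v : V} (huv : LinearIndependent K ![u, v]) :
    Module.finrank K (Submodule.span K {u, v}) = 2 := by
  rw [← Matrix.range_cons_cons_empty u v ![], finrank_span_eq_card huv, Fintype.card_fin]

end LinearAlgebra

theorem fderiv_apply_apply {𝕜 ι : Type*} [NontriviallyNormedField 𝕜] [Fintype ι] (i : ι)
    (x v : ι → 𝕜) : fderiv 𝕜 (fun y : ι → 𝕜 => y i) x v = v i := by
  rw [(hasFDerivAt_apply i x).fderiv]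
  rfl

theorem lieBracket_smul_const {a b : (Fin 3 → ℝ) → ℝ} {x : Fin 3 → ℝ}
    (ha : DifferentiableAt ℝ a x) (hb : DifferentiableAt ℝ b x) (u v : Fin 3 → ℝ) :
    lieBracket (fun y => a y • u) (fun y => b y • v) x =
      (a x * fderiv ℝ b x u) • v - (b x * fderiv ℝ a x v) • u := by
  simp only [lieBracket, fderiv_smul_const ha, fderiv_smul_const hb,
    ContinuousLinearMap.smulRight_apply, map_smul, smul_smul]

theorem lieBracket_drift_ctrl (k₂ : ℝ) :
    lieBracket (drift k₂) ctrl = fun x => (-2 * k₂ * (x 0 * x 1)) • ![0, -2, 1] := by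
  funext x
  unfold drift ctrl
  rw [lieBracket_smul_const (by fun_prop) (by fun_prop)]
  simp (disch := fun_prop) [fderiv_apply_apply, fderiv_const_mul, fderiv_fun_pow]
  ring

theorem lieBracket_ctrl_lieBracket_drift_ctrl (k₂ : ℝ) (x : Fin 3 → ℝ) :
    lieBracket ctrl (lieBracket (drift k₂) ctrl) x =
      (-2 * k₂ * x 0 * (x 0 - x 1)) • ![0, -2, 1] := by
  rw [lieBracket_drift_ctrl]
  unfold ctrl
  rw [lieBracket_smul_const (by fun_prop) (by fun_prop)]
  simp (disch := fun_prop) [fderiv_apply_apply, fderiv_const_mul, fderiv_fun_mul]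
  constructor <;> ring

theorem linearIndependent_reaction_vectors :
    LinearIndependent ℝ ![(![-1, 1, 0] : Fin 3 → ℝ), ![0, -2, 1]] := by
  refine LinearIndependent.pair_iff.mpr fun s t h => ?_
  have h0 := congrFun h 0
  have h2 := congrFun h 2
  exact ⟨by simpa using h0, by simpa using h2⟩

/-- for `k₂ ≠ 0` and every `x` with `x₁ ≠ 0`, the span of
`g(x), [f,g](x), [g,[f,g]](x)` equals `span{(−1,1,0), (0,−2,1)}`, which is a
2-dimensional subspace of `ℝ³`. -/
theorem span_brackets_eq (k₂ : ℝ) (hk₂ : k₂ ≠ 0) (x : Fin 3 → ℝ) (hx : x 0 ≠ 0) :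
    Submodule.span ℝ
        {ctrl x, lieBracket (drift k₂) ctrl x,
          lieBracket ctrl (lieBracket (drift k₂) ctrl) x} =
      Submodule.span ℝ {![(-1 : ℝ), 1, 0], ![(0 : ℝ), -2, 1]} ∧
    Module.finrank ℝ
        (Submodule.span ℝ {![(-1 : ℝ), 1, 0], ![(0 : ℝ), -2, 1]}) = 2 := by
  have hcoeff : -2 * k₂ * (x 0 * x 1) ≠ 0 ∨ -2 * k₂ * x 0 * (x 0 - x 1) ≠ 0 := by
    rcases eq_or_ne (x 1) 0 with h1 | h1
    · right; simp [h1, hk₂, hx]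
    · left; simp [h1, hk₂, hx]
  refine ⟨?_, finrank_span_pair_eq_two linearIndependent_reaction_vectors⟩
  rw [lieBracket_ctrl_lieBracket_drift_ctrl, lieBracket_drift_ctrl]
  exact span_smul_triple_eq_span_pair hx hcoeff _ _
end
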